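/- In the quotient model with Delsarte dual, let U = (W+Γ)/Γ ⊆ 𝕍(k,q^m) = 𝔽_{q^m}^n/Γ where W ∩ Γ = {0}, and let U^d = (W+Γ^⊥)/Γ^⊥ ⊆ 𝕍(n−k,q^m) = 𝔽_{q^m}^n/Γ^⊥. Then dim_{𝔽_q}(U^d) = n − (k − t_s), where t_s is the minimum dimension of an 𝔽_{q^m}-subspace of 𝕍(k,q^m) having defect n−k with respect to U. Moreover, the following are equivalent: (1) dim_{𝔽_q}(U^d) = n; (2) Γ^⊥ ∩ W = {0}; (3) w_U(H) < n−1 for every 𝔽_{q^m}-hyperplane H of 𝕍(k,q^m). Furthermore, if any of (1), (2), (3) holds, then (U^d)^d = U (where (U^d)^d = (W+(Γ^⊥)^⊥)/(Γ^⊥)^⊥ = (W+Γ)/Γ). -/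

import Mathlib

/-!
Put `Θ = Γ^⊥` and `d = dim_K (W ∩ Θ)`; rank–nullity for `W → V/Θ` gives `dim U^d = n - d`.

Because `W` is a subgeometry, `dim_K (W ∩ S) ≤ dim_L S` for every `L`-subspace `S`, with equality
iff `S` is spanned by `W ∩ S`. Since `W ∩ Γ = 0`, the subspaces of `V/Γ` of defect `n - k` are
therefore the images `S/Γ` of the subspaces `S ⊇ Γ` spanned by their points in `W`. As `σ` restricts
to a nondegenerate `K`-form on `W`, for `X ≤ W` the subspace `⟨X⟩^⊥` is again spanned by its points
in `W` and has dimension `n - dim X`. Hence such an `S ⊇ Γ` has `S^⊥ ⊆ Θ` spanned by `W ∩ S^⊥`, so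
`dim S ≥ n - d`, with equality for `S = ⟨W ∩ Θ⟩^⊥`: this is `t_s = k - d`. Taking `S = ⟨z⟩^⊥` for
one nonzero `z ∈ W ∩ Θ` gives a hyperplane of weight `n - 1`, whence (1) ⇔ (3).
-/

open Module Submodule

/-- The weight of the `𝔽_{q^m}`-subspace `T` with respect to the `𝔽_q`-subspace `U`:
`w_U(T) = dim_{𝔽_q}(U ∩ T)`. -/
noncomputable def wt {K L V : Type*} [Field K] [Field L] [Algebra K L]
    [AddCommGroup V] [Module K V] [Module L V] [IsScalarTower K L V]
    (U : Submodule K V) (T : Submodule L V) : ℕ :=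
  Module.finrank K ↥(U ⊓ T.restrictScalars K)

/-- The defect of `T` with respect to `U`: `ε_U(T) = w_U(T) − dim_{𝔽_{q^m}}(T)`. -/
noncomputable def defect {K L V : Type*} [Field K] [Field L] [Algebra K L]
    [AddCommGroup V] [Module K V] [Module L V] [IsScalarTower K L V]
    (U : Submodule K V) (T : Submodule L V) : ℤ :=
  (wt U T : ℤ) - Module.finrank L ↥T

/-- `ε_U(r)`: the maximum defect of `r`-dimensional `𝔽_{q^m}`-subspaces w.r.t. `U`. -/
noncomputable def maxDefect {K V : Type*} (L : Type*) [Field K] [Field L] [Algebra K L]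
    [AddCommGroup V] [Module K V] [Module L V] [IsScalarTower K L V]
    (U : Submodule K V) (r : ℕ) : ℤ :=
  sSup {e : ℤ | ∃ T : Submodule L V, Module.finrank L ↥T = r ∧ e = defect U T}

theorem LinearMap.finrank_map_add_finrank_inf_ker {R M N : Type*} [Field R] [AddCommGroup M]
    [AddCommGroup N] [Module R M] [Module R N] (f : M →ₗ[R] N) (p : Submodule R M)
    [FiniteDimensional R p] :
    finrank R (p.map f) + finrank R ↥(p ⊓ LinearMap.ker f) = finrank R p := by
  rw [← LinearMap.range_domRestrict, ← LinearMap.finrank_range_add_finrank_ker (f.domRestrict p),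
    LinearMap.ker_domRestrict, ← finrank_map_subtype_eq p, map_comap_subtype]

theorem Submodule.finrank_comap_mkQ {L V : Type*} [Field L] [AddCommGroup V] [Module L V]
    [FiniteDimensional L V] (Γ : Submodule L V) (T : Submodule L (V ⧸ Γ)) :
    finrank L (T.comap Γ.mkQ) = finrank L Γ + finrank L T := by
  have h := LinearMap.finrank_map_add_finrank_inf_ker Γ.mkQ (T.comap Γ.mkQ)
  rw [map_comap_eq_of_surjective Γ.mkQ_surjective, inf_eq_right.mpr (LinearMap.ker_le_comap _),
    ker_mkQ] at h
  omega

theorem LinearMap.BilinForm.Nondegenerate.finrank_add_finrank_orthogonal {L V : Type*} [Field L]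
    [AddCommGroup V] [Module L V] [FiniteDimensional L V] {σ : LinearMap.BilinForm L V}
    (hσ : σ.Nondegenerate) (S : Submodule L V) :
    finrank L S + finrank L (σ.orthogonal S) = finrank L V := by
  rw [LinearMap.BilinForm.finrank_orthogonal hσ]
  have := S.finrank_le
  omega

theorem LinearMap.BilinForm.mem_orthogonal_span_iff {L V : Type*} [Field L] [AddCommGroup V]
    [Module L V] (σ : LinearMap.BilinForm L V) (s : Set V) (v : V) :
    v ∈ σ.orthogonal (span L s) ↔ ∀ x ∈ s, σ x v = 0 :=
  ⟨fun hv x hx => hv x (subset_span hx),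
    fun hv _ hu => (span_le.mpr hv : span L s ≤ LinearMap.ker (σ.flip v)) hu⟩

section Subgeometry

variable {K L V : Type*} [Field K] [Field L] [AddCommGroup V] [Module K V] [Module L V]

variable (L) in
structure IsSubgeometry (W : Submodule K V) : Prop where
  finrank_span : finrank L (span L (W : Set V)) = finrank K W
  finrank_eq : finrank K W = finrank L V

theorem IsSubgeometry.finiteDimensional [FiniteDimensional L V] {W : Submodule K V}
    (hW : IsSubgeometry L W) : FiniteDimensional K W := by
  rcases Nat.eq_zero_or_pos (finrank L V) with h | h
  · have : Subsingleton V := finrank_zero_iff.mp h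
    infer_instance
  · exact Module.finite_of_finrank_pos (hW.finrank_eq ▸ h)

variable [Algebra K L] [IsScalarTower K L V]

theorem Submodule.finrank_span_le_finrank (X : Submodule K V) [FiniteDimensional K X] :
    finrank L (span L (X : Set V)) ≤ finrank K X := by
  let b := Module.finBasis K X
  have hX : span L (Set.range (X.subtype ∘ b)) = span L (X : Set V) := by
    rw [← span_span_of_tower K L, Set.range_comp, span_image, b.span_eq, map_top, range_subtype]
  rw [← hX]
  simpa [Set.finrank] using finrank_range_le_card (R := L) (X.subtype ∘ b)

variable [FiniteDimensional L V] {W : Submodule K V}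

namespace IsSubgeometry

/- Complete `X` to `X ⊕ Y = W`: the spans of `X` and `Y` together span `⟨W⟩`, of dimension
`dim X + dim Y`, and neither span exceeds the dimension of its generator. -/
theorem finrank_span_of_le (hW : IsSubgeometry L W) {X : Submodule K V} (hX : X ≤ W) :
    finrank L (span L (X : Set V)) = finrank K X := by
  have := hW.finiteDimensional
  have := finiteDimensional_of_le hX
  obtain ⟨Y, hXY⟩ := Submodule.exists_isCompl (X.comap W.subtype)
  set Y' := Y.map W.subtype
  have hXW : (X.comap W.subtype).map W.subtype = X := by
    rw [map_comap_subtype, inf_eq_right.mpr hX]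
  have hsup : X ⊔ Y' = W := by
    rw [← hXW, ← Submodule.map_sup, hXY.sup_eq_top, map_subtype_top]
  have hdim : finrank K X + finrank K Y' = finrank K W := by
    rw [finrank_map_subtype_eq, ← (comapSubtypeEquivOfLe hX).finrank_eq]
    exact finrank_add_eq_of_isCompl hXY
  have hspan : span L (W : Set V) = span L (X : Set V) ⊔ span L (Y' : Set V) := by
    rw [← span_union, ← span_span_of_tower K L (_ ∪ _), span_union, span_eq, span_eq, hsup]
  have h := finrank_add_le_finrank_add_finrank (span L (X : Set V)) (span L (Y' : Set V))
  rw [← hspan, hW.finrank_span] at h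
  have hXle := finrank_span_le_finrank (L := L) X
  have hYle := finrank_span_le_finrank (L := L) Y'
  omega

theorem finrank_inf_le (hW : IsSubgeometry L W) (S : Submodule L V) :
    finrank K ↥(W ⊓ S.restrictScalars K) ≤ finrank L S := by
  rw [← hW.finrank_span_of_le inf_le_left]
  exact finrank_mono (span_le.mpr fun _ hv => hv.2)

theorem span_inf_eq (hW : IsSubgeometry L W) {S : Submodule L V}
    (hS : finrank L S ≤ finrank K ↥(W ⊓ S.restrictScalars K)) :
    span L ((W ⊓ S.restrictScalars K : Submodule K V) : Set V) = S :=
  eq_of_le_of_finrank_le (span_le.mpr fun _ hv => hv.2) (hW.finrank_span_of_le inf_le_left ▸ hS)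

end IsSubgeometry

end Subgeometry

section Form

variable {K L V : Type*} [Field K] [Field L] [Algebra K L]
  [AddCommGroup V] [Module K V] [Module L V] [IsScalarTower K L V]

/-- `σ` is the `L`-linear extension of a left-nondegenerate `K`-form `σ'` on `W`. -/
structure LinearMap.BilinForm.RestrictsToNondegenerate (σ : LinearMap.BilinForm L V)
    (W : Submodule K V) : Prop where
  apply_mem_range : ∀ x ∈ W, ∀ y ∈ W, σ x y ∈ (algebraMap K L).range
  eq_zero_of_forall : ∀ x ∈ W, (∀ y ∈ W, σ x y = 0) → x = 0

namespace LinearMap.BilinForm.RestrictsToNondegenerate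

variable {σ : LinearMap.BilinForm L V} {W : Submodule K V}

theorem finrank_inf_orthogonal_span_add [FiniteDimensional K W]
    (hσW : σ.RestrictsToNondegenerate W) {X : Submodule K V} (hX : X ≤ W) :
    finrank K ↥(W ⊓ (σ.orthogonal (span L (X : Set V))).restrictScalars K) + finrank K X =
      finrank K W := by
  let σ' : LinearMap.BilinForm K W := LinearMap.restrictScalarsRange₂ W.subtype W.subtype
    (Algebra.linearMap K L) (FaithfulSMul.algebraMap_injective K L) σ
    (fun x y => hσW.apply_mem_range x x.2 y y.2)
  have hσ' (x y : W) : σ' x y = 0 ↔ σ x y = 0 :=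
    LinearMap.restrictScalarsRange₂_apply_eq_zero_iff _ _ _ _ _ _ x y
  have hker : LinearMap.ker σ' = ⊥ := by
    refine eq_bot_iff.mpr fun x hx => (mem_bot K).mpr (Subtype.ext ?_)
    exact hσW.eq_zero_of_forall x x.2 fun y hy =>
      (hσ' x ⟨y, hy⟩).mp (LinearMap.congr_fun hx ⟨y, hy⟩)
  have horth : (σ'.orthogonal (X.comap W.subtype)).map W.subtype =
      W ⊓ (σ.orthogonal (span L (X : Set V))).restrictScalars K := by
    ext v
    simp only [mem_map, mem_inf, restrictScalars_mem, LinearMap.BilinForm.mem_orthogonal_span_iff]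
    constructor
    · rintro ⟨w, hw, rfl⟩
      exact ⟨w.2, fun x hx => (hσ' ⟨x, hX hx⟩ w).mp (hw ⟨x, hX hx⟩ hx)⟩
    · rintro ⟨hv, hvX⟩
      exact ⟨⟨v, hv⟩, fun x hx => (hσ' x ⟨v, hv⟩).mpr (hvX x hx), rfl⟩
  have h := LinearMap.BilinForm.finrank_add_finrank_orthogonal' (B := σ') (X.comap W.subtype)
  rw [hker, inf_bot_eq, finrank_bot, add_zero, (comapSubtypeEquivOfLe hX).finrank_eq,
    ← finrank_map_subtype_eq, horth] at h
  omega

theorem span_inf_orthogonal_span [FiniteDimensional L V] (hσW : σ.RestrictsToNondegenerate W)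
    (hW : IsSubgeometry L W) (hσ : σ.Nondegenerate) {X : Submodule K V} (hX : X ≤ W) :
    span L ((W ⊓ (σ.orthogonal (span L (X : Set V))).restrictScalars K : Submodule K V) : Set V) =
      σ.orthogonal (span L (X : Set V)) := by
  have := hW.finiteDimensional
  refine hW.span_inf_eq ?_
  have h := hσW.finrank_inf_orthogonal_span_add hX
  have h' := hσ.finrank_add_finrank_orthogonal (span L (X : Set V))
  rw [hW.finrank_span_of_le hX, ← hW.finrank_eq] at h'
  omega

end LinearMap.BilinForm.RestrictsToNondegenerate

end Form

section DelsarteDual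

variable {K L V : Type*} [Field K] [Field L] [Algebra K L]
  [AddCommGroup V] [Module K V] [Module L V] [IsScalarTower K L V]
  {W : Submodule K V} {Γ : Submodule L V}

theorem wt_map_mkQ [FiniteDimensional K W] (hΓW : Γ.restrictScalars K ⊓ W = ⊥)
    (T : Submodule L (V ⧸ Γ)) :
    wt (W.map (Γ.mkQ.restrictScalars K)) T =
      finrank K ↥(W ⊓ (T.comap Γ.mkQ).restrictScalars K) := by
  have himg : W.map (Γ.mkQ.restrictScalars K) ⊓ T.restrictScalars K =
      (W ⊓ (T.comap Γ.mkQ).restrictScalars K).map (Γ.mkQ.restrictScalars K) := by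
    ext x
    simp only [mem_inf, restrictScalars_mem, mem_map, LinearMap.restrictScalars_apply, mem_comap]
    constructor
    · rintro ⟨⟨w, hw, rfl⟩, hwT⟩
      exact ⟨w, ⟨hw, hwT⟩, rfl⟩
    · rintro ⟨w, ⟨hw, hwT⟩, rfl⟩
      exact ⟨⟨w, hw, rfl⟩, hwT⟩
  have hdisj : (W ⊓ (T.comap Γ.mkQ).restrictScalars K) ⊓
      LinearMap.ker (Γ.mkQ.restrictScalars K) = ⊥ := by
    rw [LinearMap.ker_restrictScalars, ker_mkQ, eq_bot_iff, ← hΓW]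
    exact fun x hx => ⟨hx.2, hx.1.1⟩
  have := finiteDimensional_of_le (inf_le_left : W ⊓ (T.comap Γ.mkQ).restrictScalars K ≤ W)
  have h := LinearMap.finrank_map_add_finrank_inf_ker (Γ.mkQ.restrictScalars K)
    (W ⊓ (T.comap Γ.mkQ).restrictScalars K)
  rw [hdisj, finrank_bot, add_zero] at h
  rw [wt, himg, h]

variable [FiniteDimensional L V] {σ : LinearMap.BilinForm L V}

theorem wt_map_mkQ_le (hW : IsSubgeometry L W) (hΓW : Γ.restrictScalars K ⊓ W = ⊥)
    (T : Submodule L (V ⧸ Γ)) :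
    wt (W.map (Γ.mkQ.restrictScalars K)) T ≤ finrank L Γ + finrank L T := by
  have := hW.finiteDimensional
  rw [wt_map_mkQ hΓW, ← finrank_comap_mkQ]
  exact hW.finrank_inf_le _

theorem finrank_orthogonal_le_of_wt_eq (hW : IsSubgeometry L W) (hσ : σ.Nondegenerate)
    (hσW : σ.RestrictsToNondegenerate W) (hΓW : Γ.restrictScalars K ⊓ W = ⊥)
    {T : Submodule L (V ⧸ Γ)}
    (hT : wt (W.map (Γ.mkQ.restrictScalars K)) T = finrank L Γ + finrank L T) :
    finrank L (σ.orthogonal Γ) ≤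
      finrank L T + finrank K ↥(W ⊓ (σ.orthogonal Γ).restrictScalars K) := by
  have := hW.finiteDimensional
  set S := T.comap Γ.mkQ
  have hST : finrank L S = finrank L Γ + finrank L T := finrank_comap_mkQ Γ T
  have hS : finrank L S = finrank K ↥(W ⊓ S.restrictScalars K) := by
    rw [hST, ← hT, wt_map_mkQ hΓW]
  have hΓS : Γ ≤ S := ker_mkQ Γ ▸ LinearMap.ker_le_comap _
  have h := hσW.finrank_inf_orthogonal_span_add (inf_le_left : W ⊓ S.restrictScalars K ≤ W)
  rw [hW.span_inf_eq hS.le] at h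
  have hle : finrank K ↥(W ⊓ (σ.orthogonal S).restrictScalars K) ≤
      finrank K ↥(W ⊓ (σ.orthogonal Γ).restrictScalars K) :=
    finrank_mono (inf_le_inf_left _ fun _ hv => LinearMap.BilinForm.orthogonal_le hΓS hv)
  have hΓΘ := hσ.finrank_add_finrank_orthogonal Γ
  have hWV := hW.finrank_eq
  omega

theorem exists_wt_add_finrank_eq (hW : IsSubgeometry L W) (hσ : σ.Nondegenerate)
    (hσrefl : σ.IsRefl) (hσW : σ.RestrictsToNondegenerate W) (hΓW : Γ.restrictScalars K ⊓ W = ⊥)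
    {X : Submodule K V} (hX : X ≤ W ⊓ (σ.orthogonal Γ).restrictScalars K) :
    ∃ T : Submodule L (V ⧸ Γ), finrank L T + finrank K X = finrank L (σ.orthogonal Γ) ∧
      wt (W.map (Γ.mkQ.restrictScalars K)) T + finrank K X = finrank L V := by
  have := hW.finiteDimensional
  have hXW : X ≤ W := hX.trans inf_le_left
  set S := σ.orthogonal (span L (X : Set V))
  have hΓS : Γ ≤ S := (LinearMap.BilinForm.le_orthogonal_orthogonal hσrefl).trans
    (LinearMap.BilinForm.orthogonal_le (span_le.mpr fun _ hv => (hX hv).2))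
  have hSX : finrank L S + finrank K X = finrank L V := by
    rw [← hW.finrank_span_of_le hXW, add_comm]
    exact hσ.finrank_add_finrank_orthogonal _
  have hWS : finrank K ↥(W ⊓ S.restrictScalars K) = finrank L S := by
    rw [← hW.finrank_span_of_le inf_le_left, hσW.span_inf_orthogonal_span hW hσ hXW]
  have hST : (S.map Γ.mkQ).comap Γ.mkQ = S := by
    rw [comap_map_eq, ker_mkQ, sup_eq_left.mpr hΓS]
  refine ⟨S.map Γ.mkQ, ?_, ?_⟩
  · have hΓΘ := hσ.finrank_add_finrank_orthogonal Γ
    have hdim := finrank_comap_mkQ Γ (S.map Γ.mkQ)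
    rw [hST] at hdim
    omega
  · rw [wt_map_mkQ hΓW, hST, hWS, hSX]

theorem sInf_finrank_defect_eq (hW : IsSubgeometry L W) (hσ : σ.Nondegenerate)
    (hσrefl : σ.IsRefl) (hσW : σ.RestrictsToNondegenerate W) (hΓW : Γ.restrictScalars K ⊓ W = ⊥) :
    sInf {r : ℕ | ∃ T : Submodule L (V ⧸ Γ),
        finrank L T = r ∧ defect (W.map (Γ.mkQ.restrictScalars K)) T = finrank L Γ} =
      finrank L (σ.orthogonal Γ) - finrank K ↥(W ⊓ (σ.orthogonal Γ).restrictScalars K) := by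
  have hdefect (T : Submodule L (V ⧸ Γ)) :
      defect (W.map (Γ.mkQ.restrictScalars K)) T = finrank L Γ ↔
        wt (W.map (Γ.mkQ.restrictScalars K)) T = finrank L Γ + finrank L T := by
    rw [defect]
    omega
  have hΓΘ := hσ.finrank_add_finrank_orthogonal Γ
  obtain ⟨T, hTdim, hTwt⟩ := exists_wt_add_finrank_eq hW hσ hσrefl hσW hΓW le_rfl
  have hmem : finrank L (σ.orthogonal Γ) - finrank K ↥(W ⊓ (σ.orthogonal Γ).restrictScalars K) ∈
      {r : ℕ | ∃ T : Submodule L (V ⧸ Γ),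
        finrank L T = r ∧ defect (W.map (Γ.mkQ.restrictScalars K)) T = finrank L Γ} :=
    ⟨T, by omega, (hdefect T).mpr (by omega)⟩
  refine le_antisymm (Nat.sInf_le hmem) (le_csInf ⟨_, hmem⟩ ?_)
  rintro r ⟨T', rfl, hT'⟩
  have := finrank_orthogonal_le_of_wt_eq hW hσ hσW hΓW ((hdefect T').mp hT')
  omega

theorem forall_wt_add_one_lt_iff (hW : IsSubgeometry L W) (hσ : σ.Nondegenerate)
    (hσrefl : σ.IsRefl) (hσW : σ.RestrictsToNondegenerate W) (hΓW : Γ.restrictScalars K ⊓ W = ⊥) :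
    (∀ H : Submodule L (V ⧸ Γ), finrank L H + 1 = finrank L (σ.orthogonal Γ) →
        wt (W.map (Γ.mkQ.restrictScalars K)) H + 1 < finrank L V) ↔
      W ⊓ (σ.orthogonal Γ).restrictScalars K = ⊥ := by
  have hΓΘ := hσ.finrank_add_finrank_orthogonal Γ
  constructor
  · intro h
    by_contra hne
    obtain ⟨z, hz, hz0⟩ := exists_mem_ne_zero_of_ne_bot hne
    obtain ⟨H, hHdim, hHwt⟩ := exists_wt_add_finrank_eq hW hσ hσrefl hσW hΓW
      (span_le.mpr (Set.singleton_subset_iff.mpr hz))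
    rw [finrank_span_singleton hz0] at hHdim hHwt
    have := h H hHdim
    omega
  · intro hbot H hH
    by_contra hwt
    have hle := wt_map_mkQ_le hW hΓW H
    have := finrank_orthogonal_le_of_wt_eq hW hσ hσW hΓW (T := H) (by omega)
    rw [hbot, finrank_bot] at this
    omega

end DelsarteDual

theorem statement7_general {K L Vn : Type*} [Field K] [Field L] [Algebra K L]
    [AddCommGroup Vn] [Module K Vn] [Module L Vn] [IsScalarTower K L Vn]
    [FiniteDimensional L Vn]
    (n k : ℕ) (hkn : k < n)
    (hVn : Module.finrank L Vn = n)
    (W : Submodule K Vn) (hW : Module.finrank K ↥W = n)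
    (hWstar : Module.finrank L ↥(Submodule.span L (W : Set Vn)) = n)
    -- `σ` is the `𝔽_{q^m}`-extension of a non-degenerate reflexive bilinear form `σ'` on `W`
    (σ : Vn →ₗ[L] Vn →ₗ[L] L)
    (hσnd : LinearMap.BilinForm.Nondegenerate σ)
    (hσrefl : LinearMap.IsRefl σ)
    (hσW : ∀ x ∈ W, ∀ y ∈ W, σ x y ∈ (algebraMap K L).range)
    (hσ'nd : ∀ x ∈ W, (∀ y ∈ W, σ x y = 0) → x = 0)
    (Γ : Submodule L Vn) (hΓ : Module.finrank L ↥Γ = n - k)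
    (hΓW : Γ.restrictScalars K ⊓ W = ⊥)
    -- `U = (W+Γ)/Γ` and its Delsarte dual `U^d = (W+Γ^⊥)/Γ^⊥`
    (U : Submodule K (Vn ⧸ Γ)) (hU : U = Submodule.map (Γ.mkQ.restrictScalars K) W)
    (Ud : Submodule K (Vn ⧸ LinearMap.BilinForm.orthogonal σ Γ))
    (hUd : Ud = Submodule.map ((LinearMap.BilinForm.orthogonal σ Γ).mkQ.restrictScalars K) W)
    -- `t_s`: the minimum dimension of a subspace of defect `n−k` w.r.t. `U`
    (ts : ℕ) (hts : ts = sInf {r : ℕ | ∃ T : Submodule L (Vn ⧸ Γ),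
      Module.finrank L ↥T = r ∧ defect U T = (n : ℤ) - (k : ℤ)}) :
    -- `dim_{𝔽_q}(U^d) = n − (k − t_s)`
    Module.finrank K ↥Ud = n - (k - ts) ∧
    -- (1) ↔ (2)
    (Module.finrank K ↥Ud = n ↔
      (LinearMap.BilinForm.orthogonal σ Γ).restrictScalars K ⊓ W = ⊥) ∧
    -- (1) ↔ (3)
    (Module.finrank K ↥Ud = n ↔
      ∀ H : Submodule L (Vn ⧸ Γ), Module.finrank L ↥H + 1 = k → wt U H + 1 < n) ∧
    -- if any of the equivalent conditions holds then `(U^d)^d = U`, i.e. `Γ^⊥⊥ = Γ`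
    (Module.finrank K ↥Ud = n →
      LinearMap.BilinForm.orthogonal σ (LinearMap.BilinForm.orthogonal σ Γ) = Γ) := by
  have hWsub : IsSubgeometry L W := ⟨hWstar.trans hW.symm, hW.trans hVn.symm⟩
  have hσ' : LinearMap.BilinForm.RestrictsToNondegenerate σ W := ⟨hσW, hσ'nd⟩
  have := hWsub.finiteDimensional
  have hΘ : finrank L (LinearMap.BilinForm.orthogonal σ Γ) = k := by
    have := hσnd.finrank_add_finrank_orthogonal Γ
    omega
  obtain ⟨d, hd⟩ :
      ∃ d, finrank K ↥(W ⊓ (LinearMap.BilinForm.orthogonal σ Γ).restrictScalars K) = d :=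
    ⟨_, rfl⟩
  have hUd_dim : finrank K Ud + d = n := by
    have h := LinearMap.finrank_map_add_finrank_inf_ker
      ((LinearMap.BilinForm.orthogonal σ Γ).mkQ.restrictScalars K) W
    rwa [LinearMap.ker_restrictScalars, ker_mkQ, hd, hW, ← hUd] at h
  have hdk : d ≤ k := hΘ ▸ hd ▸ hWsub.finrank_inf_le _
  have hnk : (n : ℤ) - (k : ℤ) = (finrank L Γ : ℤ) := by
    rw [hΓ, Nat.cast_sub hkn.le]
  have hts' : ts = k - d := by
    rw [hts, hnk, hU, sInf_finrank_defect_eq hWsub hσnd hσrefl hσ' hΓW, hΘ, hd]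
  have hhyp := forall_wt_add_one_lt_iff hWsub hσnd hσrefl hσ' hΓW
  rw [hΘ, hVn, ← hU] at hhyp
  refine ⟨by omega, ?_, ?_, fun _ => LinearMap.BilinForm.orthogonal_orthogonal hσnd hσrefl Γ⟩
  · rw [inf_comm, ← finrank_eq_zero, hd]
    omega
  · rw [hhyp, ← finrank_eq_zero, hd]
    omega

/-- Proposition 1.27: dimension of the Delsarte dual, and equivalent
non-degeneracy conditions. `U = (W+Γ)/Γ`, `U^d = (W+Γ^⊥)/Γ^⊥`. -/
theorem statement7 {K L Vn : Type*} [Field K] [Field L] [Algebra K L]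
    [Fintype K] [Fintype L]
    [AddCommGroup Vn] [Module K Vn] [Module L Vn] [IsScalarTower K L Vn]
    [FiniteDimensional L Vn]
    (m n k : ℕ) (hm : 0 < m) (hk : 0 < k) (hkn : k < n)
    (hmL : Module.finrank K L = m) (hVn : Module.finrank L Vn = n)
    (W : Submodule K Vn) (hW : Module.finrank K ↥W = n)
    (hWstar : Module.finrank L ↥(Submodule.span L (W : Set Vn)) = n)
    -- `σ` is the `𝔽_{q^m}`-extension of a non-degenerate reflexive bilinear form `σ'` on `W`
    (σ : Vn →ₗ[L] Vn →ₗ[L] L)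
    (hσnd : LinearMap.BilinForm.Nondegenerate σ)
    (hσrefl : LinearMap.IsRefl σ)
    (hσW : ∀ x ∈ W, ∀ y ∈ W, σ x y ∈ (algebraMap K L).range)
    (hσ'nd : ∀ x ∈ W, (∀ y ∈ W, σ x y = 0) → x = 0)
    (Γ : Submodule L Vn) (hΓ : Module.finrank L ↥Γ = n - k)
    (hΓW : Γ.restrictScalars K ⊓ W = ⊥)
    -- `U = (W+Γ)/Γ` and its Delsarte dual `U^d = (W+Γ^⊥)/Γ^⊥`
    (U : Submodule K (Vn ⧸ Γ)) (hU : U = Submodule.map (Γ.mkQ.restrictScalars K) W)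
    (Ud : Submodule K (Vn ⧸ LinearMap.BilinForm.orthogonal σ Γ))
    (hUd : Ud = Submodule.map ((LinearMap.BilinForm.orthogonal σ Γ).mkQ.restrictScalars K) W)
    -- `t_s`: the minimum dimension of a subspace of defect `n−k` w.r.t. `U`
    (ts : ℕ) (hts : ts = sInf {r : ℕ | ∃ T : Submodule L (Vn ⧸ Γ),
      Module.finrank L ↥T = r ∧ defect U T = (n : ℤ) - (k : ℤ)}) :
    -- `dim_{𝔽_q}(U^d) = n − (k − t_s)`
    Module.finrank K ↥Ud = n - (k - ts) ∧
    -- (1) ↔ (2)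
    (Module.finrank K ↥Ud = n ↔
      (LinearMap.BilinForm.orthogonal σ Γ).restrictScalars K ⊓ W = ⊥) ∧
    -- (1) ↔ (3)
    (Module.finrank K ↥Ud = n ↔
      ∀ H : Submodule L (Vn ⧸ Γ), Module.finrank L ↥H + 1 = k → wt U H + 1 < n) ∧
    -- if any of the equivalent conditions holds then `(U^d)^d = U`, i.e. `Γ^⊥⊥ = Γ`
    (Module.finrank K ↥Ud = n →
      LinearMap.BilinForm.orthogonal σ (LinearMap.BilinForm.orthogonal σ Γ) = Γ) :=
  statement7_general n k hkn hVn W hW hWstar σ hσnd hσrefl hσW hσ'nd Γ hΓ hΓW U hU Ud hUd ts hts
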